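/- There exists N₀ such that for all N ≥ N₀ and all integers i with √N + 1 ≤ i ≤ N − 22, one has τ_i((i + 1)/(√(N − i + 3) + 0.148)) ≥ i/(√(N − i + 4) + 0.148). -/
import Mathlib


open Filter Real

set_option maxHeartbeats 1600000 in
private lemma keyQ_aux (a b i : ℝ) (ha : 5 ≤ a) (hd : (b-a)*(a+b) = 1) (hab : a ≤ b)
    (h1 : a^2 ≤ i^2 - 3*i + 4) (h2 : 10003 ≤ a^2 + i) (hi : 101 ≤ i) :
    0 ≤ 2*i^2*(a+37/250)^2 + (a+b)*(b+37/250)*((i+1)*(a+37/250) - (a+37/250)^2 - (i+1)^2) := by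
  set d : ℝ := b - a with hdd
  have hb : b = a + d := by rw [hdd]; ring
  have hdge : 0 ≤ d := by rw [hdd]; linarith
  have hdne : d ≠ 0 := by intro h; rw [h] at hd; simp at hd
  have hd0 : 0 < d := hdge.lt_of_ne (Ne.symm hdne)
  have hd2 : d*(2*a+d) = 1 := by rw [hdd]; linear_combination hd
  have h2ad : 2*a*d ≤ 1 := by nlinarith [sq_nonneg d]
  have hd10 : d ≤ 1/10 := by nlinarith [mul_nonneg (by linarith : (0:ℝ) ≤ a - 5) hd0.le]
  have hdA : d*(a+37/250) ≤ 1/2 + 37/2500 := by nlinarith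
  have hq2 : 0 ≤ 2*(37/250)*a + 2*(37/250)^2 - 1 - d*(a+37/250) := by
    nlinarith [hd2, mul_nonneg (by nlinarith : (0:ℝ) ≤ 2*(37/250)*a + 2*(37/250)^2 - 1) hd0.le,
      mul_pos (by linarith : (0:ℝ) < 2*a+d) hd0]
  have hu0 : (0:ℝ) < i + 1 := by linarith
  -- identity : Q = q2 u^2 + q1 u + q0
  have hEQ : 2*i^2*(a+37/250)^2 + (a+b)*(b+37/250)*((i+1)*(a+37/250) - (a+37/250)^2 - (i+1)^2)
      = (2*(37/250)*a + 2*(37/250)^2 - 1 - d*(a+37/250))*(i+1)^2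
        + (a+37/250)*(2*a^2+2*(37/250)*a-4*a+1-4*(37/250)+d*(a+37/250))*(i+1)
        + (a+37/250)^2*(1-2*a^2-2*(37/250)*a-d*(a+37/250)) := by
    rw [hb]
    linear_combination ((-54619/62500) + (-463/250)*i + (-1)*i^2 + (88/125)*a + i*a + (-1)*a^2) * hd2
  rw [hEQ]
  have hstep2 : (a+37/250)*(2*a^2+2*(37/250)*a-4*a+1-4*(37/250))*(i+1)
      ≤ (a+37/250)*(2*a^2+2*(37/250)*a-4*a+1-4*(37/250)+d*(a+37/250))*(i+1) := by
    have : (0:ℝ) ≤ (a+37/250)*(d*(a+37/250))*(i+1) := by positivity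
    nlinarith [this]
  have hstep3 : (a+37/250)^2*(1/2 - 37/2500 -2*a^2-2*(37/250)*a)
      ≤ (a+37/250)^2*(1-2*a^2-2*(37/250)*a-d*(a+37/250)) := by
    nlinarith [sq_nonneg (a+37/250), hdA, mul_le_mul_of_nonneg_left hdA (sq_nonneg (a+37/250))]
  have hstep1 : 0 ≤ (2*(37/250)*a + 2*(37/250)^2 - 1 - d*(a+37/250))*(i+1)^2 :=
    mul_nonneg hq2 (sq_nonneg _)
  -- reduce to R ≥ 0
  have hP1 : (0:ℝ) ≤ 2*a^2+2*(37/250)*a-4*a+1-4*(37/250) := by nlinarith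
  rcases le_total a 14 with hc | hc
  · -- small a : i large
    have hilarge : 10003 - a^2 ≤ i := by linarith
    have hfin : 0 ≤ (a+37/250)*(2*a^2+2*(37/250)*a-4*a+1-4*(37/250))*(i+1)
        + (a+37/250)^2*(1/2 - 37/2500 -2*a^2-2*(37/250)*a) := by
      nlinarith [mul_nonneg hP1 (by nlinarith : (0:ℝ) ≤ i + 1 - (10004 - a^2)),
        mul_nonneg (by nlinarith : (0:ℝ) ≤ (14-a)) (sq_nonneg a),
        mul_nonneg (mul_nonneg (by nlinarith : (0:ℝ) ≤ (14-a)) (sq_nonneg a)) (by linarith : (0:ℝ) ≤ a)]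
    linarith [hstep1, hstep2, hstep3, hfin]
  · -- large a : use u ≥ a + 2.46
    have hau : a ≤ i + 1 := by nlinarith
    have hua : a + 123/50 ≤ i + 1 := by
      nlinarith [mul_pos (by linarith : (0:ℝ) < i + 1 + a) (by linarith : (0:ℝ) < i+1)]
    have hfin : 0 ≤ (a+37/250)*(2*a^2+2*(37/250)*a-4*a+1-4*(37/250))*(i+1)
        + (a+37/250)^2*(1/2 - 37/2500 -2*a^2-2*(37/250)*a) := by
      nlinarith [mul_nonneg hP1 (by linarith : (0:ℝ) ≤ i + 1 - (a + 123/50)),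
        mul_nonneg (by linarith : (0:ℝ) ≤ a - 14) (by linarith : (0:ℝ) ≤ a - 14),
        mul_nonneg (mul_nonneg (by linarith : (0:ℝ) ≤ a - 14) (by linarith : (0:ℝ) ≤ a - 14))
          (by linarith : (0:ℝ) ≤ a)]
    linarith [hstep1, hstep2, hstep3, hfin]

set_option maxHeartbeats 1600000 in
private lemma key_aux (a b i : ℝ) (ha : 5 ≤ a) (hd : (b-a)*(a+b) = 1) (hab : a ≤ b)
    (h1 : a^2 ≤ i^2 - 3*i + 4) (h2 : 10003 ≤ a^2 + i) (hi : 101 ≤ i) :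
    i / (b + 0.148) ≤
      (-((i+1)/(a+0.148)) ^ 3 + ((i+1)/(a+0.148)) ^ 2 + (2 * i ^ 2 - 1) * ((i+1)/(a+0.148)))
        / (2 * i * (i + 1)) := by
  have hc : (0.148:ℝ) = 37/250 := by norm_num
  rw [hc]
  have hA : (0:ℝ) < a + 37/250 := by linarith
  have hB : (0:ℝ) < b + 37/250 := by linarith
  have hden : (0:ℝ) < 2 * i * (i + 1) := by nlinarith
  rw [div_le_div_iff₀ hB hden]
  have hQ := keyQ_aux a b i ha hd hab h1 h2 hi
  have hab0 : (0:ℝ) < a + b := by linarith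
  have hEQ : (a+b) * ((2*i^2*(a+37/250)^2 - (a+37/250)^2 + (i+1)*(a+37/250) - (i+1)^2) * (b+37/250)
        - 2*i^2*(a+37/250)^3)
      = 2*i^2*(a+37/250)^2 + (a+b)*(b+37/250)*((i+1)*(a+37/250) - (a+37/250)^2 - (i+1)^2) := by
    linear_combination (2*i^2*(a+37/250)^2) * hd
  have hX : 0 ≤ (2*i^2*(a+37/250)^2 - (a+37/250)^2 + (i+1)*(a+37/250) - (i+1)^2) * (b+37/250)
        - 2*i^2*(a+37/250)^3 := by
    rw [← hEQ] at hQ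
    exact nonneg_of_mul_nonneg_right hQ hab0
  have ht : (-((i+1)/(a+37/250)) ^ 3 + ((i+1)/(a+37/250)) ^ 2 + (2 * i ^ 2 - 1) * ((i+1)/(a+37/250)))
      = ((2*i^2*(a+37/250)^2 - (a+37/250)^2 + (i+1)*(a+37/250) - (i+1)^2) * (i+1)) / (a+37/250)^3 := by
    field_simp
    ring
  rw [ht, div_mul_eq_mul_div, le_div_iff₀ (by positivity : (0:ℝ) < (a+37/250)^3)]
  nlinarith [mul_le_mul_of_nonneg_left hX (by linarith : (0:ℝ) ≤ i + 1)]

/-- For an integer `i ≥ 1` and real `t`, `τ_i(t) = (−t³ + t² + (2i² − 1)t)/(2i(i+1))`. -/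
noncomputable def tauFun (i : ℕ) (t : ℝ) : ℝ :=
  (-t ^ 3 + t ^ 2 + (2 * (i : ℝ) ^ 2 - 1) * t) / (2 * (i : ℝ) * ((i : ℝ) + 1))

/-- Induction-step inequality for the lower bound lemma. -/
theorem tauFun_induction_step :
    ∃ N₀ : ℕ, ∀ N : ℕ, N₀ ≤ N → ∀ i : ℕ,
      Real.sqrt N + 1 ≤ (i : ℝ) → (i : ℝ) ≤ (N : ℝ) - 22 →
      tauFun i (((i : ℝ) + 1) / (Real.sqrt ((N : ℝ) - i + 3) + 0.148)) ≥
        (i : ℝ) / (Real.sqrt ((N : ℝ) - i + 4) + 0.148) := by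
  refine ⟨10000, fun N hN i hs hle => ?_⟩
  have hN' : (10000:ℝ) ≤ (N:ℝ) := by exact_mod_cast hN
  have hx3 : (0:ℝ) ≤ (N:ℝ) - i + 3 := by linarith
  have hx4 : (0:ℝ) ≤ (N:ℝ) - i + 4 := by linarith
  set a := Real.sqrt ((N:ℝ) - i + 3) with hadef
  set b := Real.sqrt ((N:ℝ) - i + 4) with hbdef
  have ha2 : a^2 = (N:ℝ) - i + 3 := Real.sq_sqrt hx3
  have hb2 : b^2 = (N:ℝ) - i + 4 := Real.sq_sqrt hx4
  have ha0 : 0 ≤ a := Real.sqrt_nonneg _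
  have hb0 : 0 ≤ b := Real.sqrt_nonneg _
  have ha5 : 5 ≤ a := by nlinarith
  have hab : a ≤ b := Real.sqrt_le_sqrt (by linarith)
  have hd : (b-a)*(a+b) = 1 := by linear_combination hb2 - ha2
  have hsN : (100:ℝ) ≤ Real.sqrt N := by
    rw [show (100:ℝ) = Real.sqrt (100^2) from (Real.sqrt_sq (by norm_num)).symm]
    exact Real.sqrt_le_sqrt (by nlinarith)
  have hi101 : (101:ℝ) ≤ (i:ℝ) := by linarith
  have hNsq : (N:ℝ) ≤ ((i:ℝ)-1)^2 := by
    have h0 : (0:ℝ) ≤ Real.sqrt N := Real.sqrt_nonneg _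
    nlinarith [Real.sq_sqrt (show (0:ℝ) ≤ (N:ℝ) from by positivity)]
  have h1 : a^2 ≤ (i:ℝ)^2 - 3*(i:ℝ) + 4 := by nlinarith
  have h2 : (10003:ℝ) ≤ a^2 + i := by nlinarith
  exact key_aux a b i ha5 hd hab h1 h2 hi101
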